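/- arXiv:2105.02136 — 4 statements merged into one kernel-verified Lean document; each statement's English description precedes it below -/
import Mathlib

section
/- For every m ∈ ℤ and 0 < ε < 1, the m-th complex Fourier coefficient of the 2π-periodic function u ↦ -(1/(2π)) · ε/(1+ε²+(1-ε²)cos u) equals -(1/(4π)) · ρ_ε^{|m|}, where ρ_ε = (ε-1)/(ε+1). That is, (1/(2π)) ∫_{-π}^{π} [-(1/(2π)) ε/(1+ε²+(1-ε²)cos u)] e^{-imu} du = -(1/(4π)) ((ε-1)/(ε+1))^{|m|}. -/
/-!
With `ρ = (ε - 1)/(ε + 1)` the integrand is `-(1/(4π))` times the Poisson kernel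
`(1 - ρ²)/(1 - 2ρ cos u + ρ²)`, and for `|ρ| < 1` the Poisson kernel is the absolutely convergent
trigonometric series `∑ₙ ρ^|n| e^{inu}` (two geometric series in `ρ e^{±iu}`). Integrating it
termwise against `e^{-imu}`, orthogonality of the exponentials leaves `2π ρ^|m|`.
-/

open Real MeasureTheory

theorem integral_exp_I_mul_int_mul (n : ℤ) :
    ∫ u in (-π)..π, Complex.exp (Complex.I * n * u) = if n = 0 then (2 * π : ℂ) else 0 := by
  split_ifs with hn
  · simp [hn, two_mul]
  have hc : Complex.I * n ≠ 0 := by simp [Complex.I_ne_zero, hn]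
  rw [integral_exp_mul_complex hc, div_eq_zero_iff, sub_eq_zero]
  left
  have hperiod :
      Complex.I * n * (π : ℝ) = Complex.I * n * (-π : ℝ) + n * (2 * π * Complex.I) := by
    push_cast; ring
  rw [hperiod, Complex.exp_add, Complex.exp_int_mul_two_pi_mul_I, mul_one]

theorem integral_mul_exp_eq_of_hasSum {c : ℤ → ℂ} (hc : Summable fun n => ‖c n‖) {f : ℝ → ℂ}
    (hf : ∀ u : ℝ, HasSum (fun n : ℤ => c n * Complex.exp (Complex.I * n * u)) (f u)) (m : ℤ) :
    ∫ u in (-π)..π, f u * Complex.exp (-Complex.I * m * u) = 2 * π * c m := by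
  have hterm : ∀ (n : ℤ) (u : ℝ), c n * Complex.exp (Complex.I * n * u) *
      Complex.exp (-Complex.I * m * u) = c n * Complex.exp (Complex.I * (n - m : ℤ) * u) := by
    intro n u
    rw [mul_assoc, ← Complex.exp_add]
    push_cast
    ring_nf
  have hsum := intervalIntegral.hasSum_integral_of_dominated_convergence (μ := volume)
    (a := -π) (b := π) (fun n _ => ‖c n‖) (fun n => by fun_prop)
    (fun n => ae_of_all _ fun u _ => by simp [Complex.norm_exp])
    (ae_of_all _ fun _ _ => hc) intervalIntegrable_const
    (ae_of_all _ fun u _ => (hf u).mul_right (Complex.exp (-Complex.I * m * u)))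
  have hcoeff : ∀ n : ℤ, ∫ u in (-π)..π, c n * Complex.exp (Complex.I * n * u) *
      Complex.exp (-Complex.I * m * u) = if n = m then 2 * π * c m else 0 := by
    intro n
    simp only [hterm, intervalIntegral.integral_const_mul, integral_exp_I_mul_int_mul, sub_eq_zero]
    split_ifs with h
    · rw [h]; ring
    · exact mul_zero _
  simp only [hcoeff] at hsum
  exact hsum.unique (hasSum_ite_eq m _)

theorem hasSum_pow_natAbs_mul_zpow {ρ x : ℂ} (hρ : ‖ρ‖ < 1) (hx : ‖x‖ = 1) :
    HasSum (fun n : ℤ => ρ ^ n.natAbs * x ^ n) ((1 - ρ ^ 2) / ((1 - ρ * x) * (1 - ρ * x⁻¹))) := by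
  have hx0 : x ≠ 0 := norm_ne_zero_iff.mp (by rw [hx]; exact one_ne_zero)
  have hfwd : ‖ρ * x‖ < 1 := by rwa [norm_mul, hx, mul_one]
  have hbwd : ‖ρ * x⁻¹‖ < 1 := by rwa [norm_mul, norm_inv, hx, inv_one, mul_one]
  have hnonneg : HasSum (fun k : ℕ => ρ ^ (k : ℤ).natAbs * x ^ (k : ℤ)) (1 - ρ * x)⁻¹ :=
    (hasSum_geometric_of_norm_lt_one hfwd).congr_fun fun k => by
      rw [Int.natAbs_natCast, zpow_natCast, mul_pow]
  have hneg : HasSum (fun k : ℕ => ρ ^ (-(k + 1 : ℤ)).natAbs * x ^ (-(k + 1 : ℤ)))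
      (ρ * x⁻¹ * (1 - ρ * x⁻¹)⁻¹) :=
    ((hasSum_geometric_of_norm_lt_one hbwd).mul_left (ρ * x⁻¹)).congr_fun fun k => by
      rw [Int.natAbs_neg, zpow_neg, ← Nat.cast_add_one, Int.natAbs_natCast, zpow_natCast,
        ← inv_pow]
      ring
  have h1 : 1 - ρ * x ≠ 0 := sub_ne_zero.mpr fun h => by simp [← h] at hfwd
  have h2 : 1 - ρ * x⁻¹ ≠ 0 := sub_ne_zero.mpr fun h => by simp [← h] at hbwd
  have hvalue : (1 - ρ * x)⁻¹ + ρ * x⁻¹ * (1 - ρ * x⁻¹)⁻¹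
      = (1 - ρ ^ 2) / ((1 - ρ * x) * (1 - ρ * x⁻¹)) := by
    rw [eq_div_iff (mul_ne_zero h1 h2)]
    linear_combination (1 - ρ * x⁻¹) * inv_mul_cancel₀ h1 +
      ρ * x⁻¹ * (1 - ρ * x) * inv_mul_cancel₀ h2 - ρ ^ 2 * mul_inv_cancel₀ hx0
  rw [← hvalue]
  exact HasSum.of_nat_of_neg_add_one (f := fun n : ℤ => ρ ^ n.natAbs * x ^ n) hnonneg hneg

theorem hasSum_pow_natAbs_mul_exp {ρ : ℝ} (hρ : |ρ| < 1) (u : ℝ) :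
    HasSum (fun n : ℤ => (ρ : ℂ) ^ n.natAbs * Complex.exp (Complex.I * n * u))
      (((1 - ρ ^ 2) / (1 - 2 * ρ * Real.cos u + ρ ^ 2) : ℝ) : ℂ) := by
  set x := Complex.exp (u * Complex.I)
  have hx0 : x ≠ 0 := Complex.exp_ne_zero _
  have hexp : ∀ n : ℤ, Complex.exp (Complex.I * n * u) = x ^ n := fun n => by
    rw [← Complex.exp_int_mul]; ring_nf
  have hcos : 2 * Complex.cos u = x + x⁻¹ := by
    rw [Complex.two_cos, neg_mul, Complex.exp_neg]
  have hden : ((1 - 2 * ρ * Real.cos u + ρ ^ 2 : ℝ) : ℂ) = (1 - ρ * x) * (1 - ρ * x⁻¹) := by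
    push_cast
    linear_combination (-(ρ : ℂ)) * hcos - (ρ : ℂ) ^ 2 * mul_inv_cancel₀ hx0
  simp only [hexp]
  rw [Complex.ofReal_div, hden]
  push_cast
  exact hasSum_pow_natAbs_mul_zpow (by rwa [Complex.norm_real]) (by simp [x, Complex.norm_exp])

theorem summable_norm_pow_natAbs {ρ : ℂ} (hρ : ‖ρ‖ < 1) :
    Summable fun n : ℤ => ‖ρ ^ n.natAbs‖ := by
  have hgeom := summable_geometric_of_lt_one (norm_nonneg ρ) hρ
  simp only [norm_pow]
  refine .of_nat_of_neg_add_one ?_ ?_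
  · simpa only [Int.natAbs_natCast] using hgeom
  · simpa only [Int.natAbs_neg, ← Nat.cast_add_one, Int.natAbs_natCast] using
      (summable_nat_add_iff 1).mpr hgeom

theorem poisson_kernel_sub_one_div_add_one (ε u : ℝ) (hε : ε + 1 ≠ 0) :
    (1 - ((ε - 1) / (ε + 1)) ^ 2) /
        (1 - 2 * ((ε - 1) / (ε + 1)) * Real.cos u + ((ε - 1) / (ε + 1)) ^ 2)
      = 2 * ε / (1 + ε ^ 2 + (1 - ε ^ 2) * Real.cos u) := by
  have hnum : 1 - ((ε - 1) / (ε + 1)) ^ 2 = 2 * (2 * ε) / (ε + 1) ^ 2 := by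
    field_simp; ring
  have hden : 1 - 2 * ((ε - 1) / (ε + 1)) * Real.cos u + ((ε - 1) / (ε + 1)) ^ 2
      = 2 * (1 + ε ^ 2 + (1 - ε ^ 2) * Real.cos u) / (ε + 1) ^ 2 := by
    field_simp; ring
  rw [hnum, hden, div_div_div_cancel_right₀ (pow_ne_zero 2 hε), mul_div_mul_left _ _ two_ne_zero]

theorem abs_sub_one_div_add_one_lt_one {ε : ℝ} (hε : 0 < ε) : |(ε - 1) / (ε + 1)| < 1 := by
  rw [abs_div, abs_of_pos (by linarith : 0 < ε + 1), div_lt_one (by linarith), abs_sub_lt_iff]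
  constructor <;> linarith

theorem stmt_2_general (ε : ℝ) (hε : 0 < ε) (m : ℤ) :
    (1 / (2 * π) : ℂ) *
      ∫ u in (-π)..π,
        ((-(1 / (2 * π)) * ε / (1 + ε ^ 2 + (1 - ε ^ 2) * Real.cos u) : ℝ) : ℂ) *
          Complex.exp (-Complex.I * m * u)
    = -(1 / (4 * π)) * (((ε - 1) / (ε + 1) : ℝ) : ℂ) ^ m.natAbs := by
  set ρ := (ε - 1) / (ε + 1)
  have hρ : |ρ| < 1 := abs_sub_one_div_add_one_lt_one hε
  have hintegrand : ∀ u : ℝ,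
      ((-(1 / (2 * π)) * ε / (1 + ε ^ 2 + (1 - ε ^ 2) * Real.cos u) : ℝ) : ℂ) *
        Complex.exp (-Complex.I * m * u)
      = -(1 / (4 * π)) * ((((1 - ρ ^ 2) / (1 - 2 * ρ * Real.cos u + ρ ^ 2) : ℝ) : ℂ) *
        Complex.exp (-Complex.I * m * u)) := fun u => by
    rw [poisson_kernel_sub_one_div_add_one ε u (by linarith)]
    push_cast
    ring
  have hcoeff := integral_mul_exp_eq_of_hasSum
    (summable_norm_pow_natAbs (by rwa [Complex.norm_real])) (hasSum_pow_natAbs_mul_exp hρ) m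
  simp only [hintegrand, intervalIntegral.integral_const_mul, hcoeff]
  field_simp

/-- The `m`-th complex Fourier coefficient of
`u ↦ -(1/(2π)) ε/(1+ε²+(1-ε²)cos u)` equals `-(1/(4π)) ρ_ε^{|m|}`
with `ρ_ε = (ε-1)/(ε+1)`. -/
theorem stmt_2 (ε : ℝ) (hε : 0 < ε) (hε1 : ε < 1) (m : ℤ) :
    (1 / (2 * π) : ℂ) *
      ∫ u in (-π)..π,
        ((-(1 / (2 * π)) * ε / (1 + ε ^ 2 + (1 - ε ^ 2) * Real.cos u) : ℝ) : ℂ) *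
          Complex.exp (-Complex.I * m * u)
    = -(1 / (4 * π)) * (((ε - 1) / (ε + 1) : ℝ) : ℂ) ^ m.natAbs :=
  stmt_2_general ε hε m
end

section
/- The operator L₁ defined on C² 2π-periodic functions by L₁[μ](s) = (1/(2π)) ∫_{-π}^{π} E_{π-s}[μ](t) dt satisfies L₁[cos(mt)](s) = (-1)^{m+1} m cos(ms) and L₁[sin(mt)](s) = (-1)^m m sin(ms) for every natural number m. -/
/-!
Both `cos` and `sin` satisfy `f (a + b) + f (a - b) = 2 f a cos b`, so the second difference
of `f (m ·)` at `x` with step `t` is `-2 f (m x) (1 - cos (m t))`. Dividing by `2 (1 - cos t)`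
gives `-f (m x)` times the Fejér-type kernel `(1 - cos (m t)) / (1 - cos t)`, a sum of `m`
Dirichlet kernels, each with integral `2π` over a period; the prescribed value `-m² f (m x)`
at `cos t = 1` is exactly the kernel's value there. So the average is `-m f (m (π - s))`, and
the reflection `π - s` produces the signs.
-/

open Real MeasureTheory

noncomputable def dirichletKernel (k : ℕ) (t : ℝ) : ℝ :=
  1 + 2 * ∑ j ∈ Finset.range k, cos ((j + 1) * t)

-- `m` times the usual (normalised) Fejér kernel of order `m`.
noncomputable def fejerKernel (m : ℕ) (t : ℝ) : ℝ :=
  ∑ k ∈ Finset.range m, dirichletKernel k t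

theorem continuous_dirichletKernel (k : ℕ) : Continuous (dirichletKernel k) := by
  unfold dirichletKernel
  fun_prop

theorem dirichletKernel_succ (k : ℕ) (t : ℝ) :
    dirichletKernel (k + 1) t = dirichletKernel k t + 2 * cos ((k + 1) * t) := by
  simp only [dirichletKernel, Finset.sum_range_succ]
  ring

theorem one_sub_cos_mul_dirichletKernel (k : ℕ) (t : ℝ) :
    (1 - cos t) * dirichletKernel k t = cos (k * t) - cos ((k + 1) * t) := by
  induction k with
  | zero => simp [dirichletKernel]
  | succ k ih =>
    have hsucc : ((k + 1 : ℕ) + 1 : ℝ) * t = (k + 1) * t + t := by push_cast; ring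
    have hprev : (k : ℝ) * t = (k + 1) * t - t := by ring
    rw [dirichletKernel_succ, mul_add, ih, hprev, hsucc, cos_add, cos_sub]
    push_cast
    ring

theorem one_sub_cos_mul_fejerKernel (m : ℕ) (t : ℝ) :
    (1 - cos t) * fejerKernel m t = 1 - cos (m * t) := by
  simp only [fejerKernel, Finset.mul_sum, one_sub_cos_mul_dirichletKernel]
  simpa using Finset.sum_range_sub' (fun k : ℕ => cos (k * t)) m

theorem cos_nat_mul_of_cos_eq_one {t : ℝ} (ht : cos t = 1) (n : ℕ) : cos (n * t) = 1 := by
  obtain ⟨k, rfl⟩ := (cos_eq_one_iff t).mp ht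
  simpa [mul_assoc] using cos_int_mul_two_pi (n * k)

theorem dirichletKernel_of_cos_eq_one {t : ℝ} (ht : cos t = 1) (k : ℕ) :
    dirichletKernel k t = 2 * k + 1 := by
  have hcos : ∀ j : ℕ, cos ((j + 1) * t) = 1 := fun j => by
    exact_mod_cast cos_nat_mul_of_cos_eq_one ht (j + 1)
  simp only [dirichletKernel, hcos, Finset.sum_const, Finset.card_range, nsmul_eq_mul, mul_one]
  ring

theorem fejerKernel_of_cos_eq_one {t : ℝ} (ht : cos t = 1) (m : ℕ) :
    fejerKernel m t = (m : ℝ) ^ 2 := by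
  induction m with
  | zero => simp [fejerKernel]
  | succ m ih =>
    rw [fejerKernel, Finset.sum_range_succ, ← fejerKernel, ih,
      dirichletKernel_of_cos_eq_one ht]
    push_cast
    ring

theorem integral_cos_nat_succ_mul (n : ℕ) : ∫ t in (-π)..π, cos ((n + 1) * t) = 0 := by
  have hn : (n + 1 : ℝ) ≠ 0 := by positivity
  have hsin : sin ((n + 1) * π) = 0 := by exact_mod_cast sin_nat_mul_pi (n + 1)
  simp [intervalIntegral.integral_comp_mul_left _ hn, hsin]

theorem integral_dirichletKernel (k : ℕ) : ∫ t in (-π)..π, dirichletKernel k t = 2 * π := by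
  induction k with
  | zero => simp [dirichletKernel, two_mul]
  | succ k ih =>
    simp only [dirichletKernel_succ]
    rw [intervalIntegral.integral_add ((continuous_dirichletKernel k).intervalIntegrable _ _)
      ((by fun_prop : Continuous fun t : ℝ => 2 * cos ((k + 1) * t)).intervalIntegrable _ _),
      intervalIntegral.integral_const_mul, ih, integral_cos_nat_succ_mul]
    ring

theorem integral_fejerKernel (m : ℕ) : ∫ t in (-π)..π, fejerKernel m t = 2 * π * m := by
  unfold fejerKernel
  rw [intervalIntegral.integral_finsetSum
    fun k _ => (continuous_dirichletKernel k).intervalIntegrable _ _]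
  simp [integral_dirichletKernel, mul_comm]

section SecondDifference

variable {f : ℝ → ℝ}

theorem second_difference_nat_mul (hf : ∀ a b, f (a + b) + f (a - b) = 2 * f a * cos b)
    (m : ℕ) (x t : ℝ) :
    f (m * (x + t)) - 2 * f (m * x) + f (m * (x - t)) = -2 * f (m * x) * (1 - cos (m * t)) := by
  have h := hf (m * x) (m * t)
  rw [mul_add, mul_sub]
  linarith

theorem eq_neg_mul_fejerKernel (hf : ∀ a b, f (a + b) + f (a - b) = 2 * f a * cos b)
    (m : ℕ) (x : ℝ) {E : ℝ → ℝ}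
    (hE_ne : ∀ t, cos t ≠ 1 →
      E t = (f (m * (x + t)) - 2 * f (m * x) + f (m * (x - t))) / (2 * (1 - cos t)))
    (hE_eq : ∀ t, cos t = 1 → E t = -(m : ℝ) ^ 2 * f (m * x)) (t : ℝ) :
    E t = -f (m * x) * fejerKernel m t := by
  by_cases ht : cos t = 1
  · rw [hE_eq t ht, fejerKernel_of_cos_eq_one ht]
    ring
  · have hden : 1 - cos t ≠ 0 := sub_ne_zero.mpr (Ne.symm ht)
    rw [hE_ne t ht, second_difference_nat_mul hf, ← one_sub_cos_mul_fejerKernel]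
    field_simp

theorem average_eq_neg_nat_mul (hf : ∀ a b, f (a + b) + f (a - b) = 2 * f a * cos b)
    (m : ℕ) (x : ℝ) {E : ℝ → ℝ}
    (hE_ne : ∀ t, cos t ≠ 1 →
      E t = (f (m * (x + t)) - 2 * f (m * x) + f (m * (x - t))) / (2 * (1 - cos t)))
    (hE_eq : ∀ t, cos t = 1 → E t = -(m : ℝ) ^ 2 * f (m * x)) :
    (1 / (2 * π)) * ∫ t in (-π)..π, E t = -m * f (m * x) := by
  simp only [eq_neg_mul_fejerKernel hf m x hE_ne hE_eq, intervalIntegral.integral_const_mul,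
    integral_fejerKernel]
  field_simp

end SecondDifference

theorem cos_add_add_cos_sub (a b : ℝ) : cos (a + b) + cos (a - b) = 2 * cos a * cos b := by
  rw [cos_add, cos_sub]
  ring

theorem sin_add_add_sin_sub (a b : ℝ) : sin (a + b) + sin (a - b) = 2 * sin a * cos b := by
  rw [sin_add, sin_sub]
  ring

/-- `L₁[cos(mt)](s) = (-1)^{m+1} m cos(ms)` and `L₁[sin(mt)](s) = (-1)^m m sin(ms)`
for every `m : ℕ`, where `L₁[μ](s) = (1/(2π)) ∫_{-π}^{π} E_{π-s}[μ](t) dt` and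
`E_x[μ]` is the continuous extension `(μ(x+t)-2μ(x)+μ(x-t))/(2(1-cos t))`, with
value `μ''(x)` when `cos t = 1`. -/
theorem stmt_14 (m : ℕ) (s : ℝ) (Ec Es : ℝ → ℝ)
    (hEc_ne : ∀ t, Real.cos t ≠ 1 →
      Ec t = (Real.cos (m * (π - s + t)) - 2 * Real.cos (m * (π - s))
              + Real.cos (m * (π - s - t))) / (2 * (1 - Real.cos t)))
    (hEc_eq : ∀ t, Real.cos t = 1 →
      Ec t = -(m : ℝ) ^ 2 * Real.cos (m * (π - s)))
    (hEs_ne : ∀ t, Real.cos t ≠ 1 →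
      Es t = (Real.sin (m * (π - s + t)) - 2 * Real.sin (m * (π - s))
              + Real.sin (m * (π - s - t))) / (2 * (1 - Real.cos t)))
    (hEs_eq : ∀ t, Real.cos t = 1 →
      Es t = -(m : ℝ) ^ 2 * Real.sin (m * (π - s))) :
    (1 / (2 * π)) * (∫ t in (-π)..π, Ec t) = (-1) ^ (m + 1) * m * Real.cos (m * s) ∧
    (1 / (2 * π)) * (∫ t in (-π)..π, Es t) = (-1) ^ m * m * Real.sin (m * s) := by
  have hreflect : (m : ℝ) * (π - s) = m * π - m * s := mul_sub _ _ _
  constructor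
  · rw [average_eq_neg_nat_mul cos_add_add_cos_sub m _ hEc_ne hEc_eq, hreflect,
      cos_nat_mul_pi_sub]
    ring
  · rw [average_eq_neg_nat_mul sin_add_add_sin_sub m _ hEs_ne hEs_eq, hreflect,
      sin_nat_mul_pi_sub]
    ring
end

section
/- The nullspace of L₁ on C² 2π-periodic functions is exactly the constant functions: L₁[μ] = 0 if and only if μ is constant, where L₁[μ](s) = (1/(2π)) ∫_{-π}^{π} E_{π-s}[μ](t) dt. -/
/-!
Maximum principle. At a maximum point `x` of `μ` the second difference
`μ (x + t) - 2 μ x + μ (x - t)` is nonpositive, so `L₁[μ](π - x)` is the mean of a nonpositive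
function; that function is integrable since the second difference is `O(t²)` and
`1 - cos t ≥ 2 t² / π²` on `[-π, π]`. Vanishing of the mean forces the second difference to vanish
on `(-π, π)`, so `μ = μ x` on an interval of length `2π`, hence everywhere by periodicity.
-/

open Real MeasureTheory Function Set

def symmSecondDiff (f : ℝ → ℝ) (x t : ℝ) : ℝ := f (x + t) - 2 * f x + f (x - t)

theorem Function.Periodic.deriv {f : ℝ → ℝ} {c : ℝ} (hf : Periodic f c) :
    Periodic (deriv f) c := fun x => by
  rw [← deriv_comp_add_const, show (fun y => f (y + c)) = f from funext hf]

theorem Function.Periodic.exists_forall_le_of_continuous {f : ℝ → ℝ} {c : ℝ} (hf : Periodic f c)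
    (hc : c ≠ 0) (hcont : Continuous f) : ∃ x, ∀ y, f y ≤ f x := by
  obtain ⟨_, ⟨x, rfl⟩, hx⟩ := (hf.compact_of_continuous hc hcont).exists_isGreatest
    (range_nonempty f)
  exact ⟨x, fun y => hx ⟨y, rfl⟩⟩

theorem Function.Periodic.forall_eq_of_eqOn_Ioo {f : ℝ → ℝ} {c a b : ℝ} (hf : Periodic f c)
    (hc : 0 < c) (hcont : Continuous f) (h : EqOn f (fun _ => b) (Ioo a (a + c))) (y : ℝ) :
    f y = b := by
  have hIcc : EqOn f (fun _ => b) (Icc a (a + c)) := by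
    simpa [closure_Ioo (by linarith : a ≠ a + c)] using h.closure hcont continuous_const
  obtain ⟨z, hz, hyz⟩ := hf.exists_mem_Ico hc y a
  exact hyz.trans (hIcc (Ico_subset_Icc_self hz))

theorem symmSecondDiff_zero (f : ℝ → ℝ) (x : ℝ) : symmSecondDiff f x 0 = 0 := by
  simp only [symmSecondDiff, add_zero, sub_zero]; ring

theorem symmSecondDiff_neg (f : ℝ → ℝ) (x t : ℝ) :
    symmSecondDiff f x (-t) = symmSecondDiff f x t := by
  simp only [symmSecondDiff, sub_neg_eq_add, ← sub_eq_add_neg]; ring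

theorem symmSecondDiff_nonpos_of_forall_le {f : ℝ → ℝ} {x : ℝ} (hx : ∀ y, f y ≤ f x) (t : ℝ) :
    symmSecondDiff f x t ≤ 0 := by
  unfold symmSecondDiff
  linarith [hx (x + t), hx (x - t)]

theorem hasDerivAt_symmSecondDiff {f : ℝ → ℝ} (hf : Differentiable ℝ f) (x u : ℝ) :
    HasDerivAt (symmSecondDiff f x) (deriv f (x + u) - deriv f (x - u)) u := by
  have hplus := (hf (x + u)).hasDerivAt.comp u ((hasDerivAt_id u).const_add x)
  have hminus := (hf (x - u)).hasDerivAt.comp u ((hasDerivAt_id u).const_sub x)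
  exact ((hplus.sub_const (2 * f x)).add hminus).congr_deriv (by ring)

theorem abs_symmSecondDiff_le {f : ℝ → ℝ} {M : ℝ} (hf : Differentiable ℝ f)
    (hf' : Differentiable ℝ (deriv f)) (hM : ∀ y, |deriv (deriv f) y| ≤ M) (x t : ℝ) :
    |symmSecondDiff f x t| ≤ 2 * M * t ^ 2 := by
  wlog ht : 0 ≤ t generalizing t
  · simpa [symmSecondDiff_neg] using this (-t) (by linarith)
  have hlip (a b : ℝ) : |deriv f a - deriv f b| ≤ M * |a - b| := by
    simpa using Convex.norm_image_sub_le_of_norm_deriv_le (fun y _ => hf' y) (fun y _ => hM y)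
      convex_univ (mem_univ b) (mem_univ a)
  have hbound : ∀ u ∈ Ico 0 t, ‖deriv f (x + u) - deriv f (x - u)‖ ≤ 2 * M * t := by
    intro u hu
    have hM0 : 0 ≤ M := (abs_nonneg _).trans (hM 0)
    calc ‖deriv f (x + u) - deriv f (x - u)‖ ≤ M * |x + u - (x - u)| := hlip _ _
      _ = M * (2 * u) := by rw [abs_of_nonneg (by linarith [hu.1])]; ring
      _ ≤ 2 * M * t := by nlinarith [hu.2]
  have := norm_image_sub_le_of_norm_deriv_le_segment'
    (fun u _ => (hasDerivAt_symmSecondDiff hf x u).hasDerivWithinAt) hbound t (right_mem_Icc.2 ht)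
  simpa [symmSecondDiff_zero, pow_two, mul_assoc] using this

theorem ae_cos_ne_one : ∀ᵐ t : ℝ, cos t ≠ 1 := by
  refine measure_mono_null (fun t ht => ?_)
    ((countable_range fun k : ℤ => k * (2 * π)).measure_zero _)
  exact (cos_eq_one_iff t).1 (not_not.1 ht)

theorem abs_div_two_mul_one_sub_cos_le {n : ℝ → ℝ} {C : ℝ} (hC : 0 ≤ C)
    (hn : ∀ t, |n t| ≤ C * t ^ 2) {t : ℝ} (ht : |t| ≤ π) :
    |n t / (2 * (1 - cos t))| ≤ C * π ^ 2 / 4 := by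
  rcases eq_or_ne t 0 with rfl | ht0
  · simp; positivity
  have hcos : 2 / π ^ 2 * t ^ 2 ≤ 1 - cos t := by linarith [cos_le_one_sub_mul_cos_sq ht]
  have hpos : 0 < 2 * (1 - cos t) := by
    have : 0 < 2 / π ^ 2 * t ^ 2 := by positivity
    linarith
  rw [abs_div, abs_of_pos hpos, div_le_iff₀ hpos]
  calc |n t| ≤ C * t ^ 2 := hn t
    _ = C * π ^ 2 / 4 * (2 * (2 / π ^ 2 * t ^ 2)) := by field_simp; ring
    _ ≤ C * π ^ 2 / 4 * (2 * (1 - cos t)) := by gcongr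

theorem eqOn_zero_of_integral_div_one_sub_cos_eq_zero {n : ℝ → ℝ} {C : ℝ} (hcont : Continuous n)
    (hnonpos : ∀ t, n t ≤ 0) (hC : 0 ≤ C) (hbound : ∀ t, |n t| ≤ C * t ^ 2)
    (hint : ∫ t in (-π)..π, n t / (2 * (1 - cos t)) = 0) : EqOn n 0 (Ioo (-π) π) := by
  set g := fun t => n t / (2 * (1 - cos t))
  have hg_int : IntegrableOn (-g) (Ioc (-π) π) := by
    refine (Measure.integrableOn_of_bounded measure_Ioc_lt_top.ne
      (hcont.measurable.div (by fun_prop)).aestronglyMeasurable (M := C * π ^ 2 / 4) ?_).neg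
    filter_upwards [ae_restrict_mem measurableSet_Ioc] with t ht
    exact abs_div_two_mul_one_sub_cos_le hC hbound (abs_le.2 ⟨ht.1.le, ht.2⟩)
  have hg_nonneg : 0 ≤ᵐ[volume.restrict (Ioc (-π) π)] -g := Filter.Eventually.of_forall fun t =>
    neg_nonneg.2 (div_nonpos_of_nonpos_of_nonneg (hnonpos t) (by linarith [cos_le_one t]))
  have hg_zero : -g =ᵐ[volume.restrict (Ioc (-π) π)] 0 := by
    rw [intervalIntegral.integral_of_le (by linarith [pi_pos])] at hint
    exact (setIntegral_eq_zero_iff_of_nonneg_ae hg_nonneg hg_int).1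
      (by simp [integral_neg, g, hint])
  have hn_zero : n =ᵐ[volume.restrict (Ioo (-π) π)] 0 := by
    filter_upwards [ae_restrict_of_ae_restrict_of_subset Ioo_subset_Ioc_self hg_zero,
      ae_restrict_of_ae ae_cos_ne_one] with t hgt hcos
    have : 2 * (1 - cos t) ≠ 0 := by intro h; apply hcos; linarith
    simpa [g, this] using hgt
  exact Measure.eqOn_open_of_ae_eq hn_zero isOpen_Ioo hcont.continuousOn continuousOn_const

theorem eq_of_integral_symmSecondDiff_div_eq_zero {f : ℝ → ℝ}
    (hf : ContDiff ℝ 2 f) (hper : Periodic f (2 * π)) {x : ℝ} (hx : ∀ y, f y ≤ f x)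
    (hint : ∫ t in (-π)..π, symmSecondDiff f x t / (2 * (1 - cos t)) = 0) (y : ℝ) :
    f y = f x := by
  have hf1 : Differentiable ℝ f := hf.differentiable two_ne_zero
  have hf2 : ContDiff ℝ 1 (deriv f) := hf.deriv'
  obtain ⟨M, hM⟩ := (hper.deriv.deriv.isBounded_of_continuous (by positivity)
    (hf2.continuous_deriv le_rfl)).exists_norm_le
  have hzero := eqOn_zero_of_integral_div_one_sub_cos_eq_zero
    (continuous_iff_continuousAt.2 fun u => (hasDerivAt_symmSecondDiff hf1 x u).continuousAt)
    (symmSecondDiff_nonpos_of_forall_le hx) (by linarith [(norm_nonneg _).trans (hM _ ⟨0, rfl⟩)])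
    (abs_symmSecondDiff_le hf1 (hf2.differentiable one_ne_zero) (fun y => hM _ ⟨y, rfl⟩) x) hint
  refine hper.forall_eq_of_eqOn_Ioo (a := x - π) two_pi_pos hf.continuous (fun y hy => ?_) y
  have hy := hzero (x := y - x) ⟨by linarith [hy.1], by linarith [hy.2]⟩
  simp only [symmSecondDiff, add_sub_cancel, Pi.zero_apply] at hy
  linarith [hx y, hx (x - (y - x))]

/-- Nullspace of `L₁` on `C²` `2π`-periodic functions is exactly the constants:
`L₁[μ] = 0 ↔ μ` is constant, where `L₁[μ](s) = (1/(2π)) ∫_{-π}^{π} E_{π-s}[μ](t) dt`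
and `E_x[μ](t) = (μ(x+t)-2μ(x)+μ(x-t))/(2(1-cos t))` for `cos t ≠ 1`,
`E_x[μ](t) = μ''(x)` for `cos t = 1`. -/
theorem stmt_15 (μ : ℝ → ℝ) (hμ : ContDiff ℝ 2 μ)
    (hper : Function.Periodic μ (2 * π)) (E : ℝ → ℝ → ℝ)
    (hE_ne : ∀ x t, Real.cos t ≠ 1 →
      E x t = (μ (x + t) - 2 * μ x + μ (x - t)) / (2 * (1 - Real.cos t)))
    (hE_eq : ∀ x t, Real.cos t = 1 → E x t = deriv (deriv μ) x) :
    (∀ s, (1 / (2 * π)) * (∫ t in (-π)..π, E (π - s) t) = 0) ↔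
      ∃ c : ℝ, ∀ s, μ s = c := by
  constructor
  · intro h
    obtain ⟨x, hx⟩ := hper.exists_forall_le_of_continuous (by positivity) hμ.continuous
    have hEx : ∫ t in (-π)..π, E x t = 0 := by simpa [pi_ne_zero] using h (π - x)
    have hint : ∫ t in (-π)..π, symmSecondDiff μ x t / (2 * (1 - cos t)) = 0 := by
      rw [← hEx]
      exact intervalIntegral.integral_congr_ae
        (ae_cos_ne_one.mono fun t ht _ => (hE_ne x t ht).symm)
    exact ⟨μ x, eq_of_integral_symmSecondDiff_div_eq_zero hμ hper hx hint⟩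
  · rintro ⟨c, hc⟩ s
    have hE : ∀ t, E (π - s) t = 0 := by
      intro t
      by_cases ht : cos t = 1
      · simp [hE_eq _ _ ht, funext hc]
      · rw [hE_ne _ _ ht, hc, hc, hc]
        ring
    simp [hE]
end

section
/- Logarithmic kernel splitting lemma (Lemma B.2): for f a smooth 2π-periodic function and s ∈ ℝ, ∫_{0}^{2π} f(t) ln(4cos²((s+t)/2) + 4ε² sin²((s+t)/2)) dt → ∫_{0}^{2π} f(t) ln(4cos²((s+t)/2)) dt as ε → 0⁺, where the limiting integrand has an integrable logarithmic singularity at s+t ≡ π (mod 2π). -/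
open Real MeasureTheory Filter Topology

/-- `log` is interval integrable on `[0, c]` for `c > 0` (improper at `0`). -/
private lemma myIntIntLog {c : ℝ} (hc : 0 < c) :
    IntervalIntegrable Real.log volume 0 c := by
  have hcont : ContinuousOn (fun x : ℝ => x * Real.log c - x * Real.log x + x)
      (Set.Icc 0 c) :=
    (((continuous_id.mul continuous_const).sub Real.continuous_mul_log).add
      continuous_id).continuousOn
  have hderiv : ∀ x ∈ Set.Ioo (0:ℝ) c,
      HasDerivAt (fun x : ℝ => x * Real.log c - x * Real.log x + x)
        (Real.log c - Real.log x) x := by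
    intro x hx
    have h1 : HasDerivAt (fun y : ℝ => y * Real.log y) (Real.log x + 1) x := by
      have := (hasDerivAt_id x).mul (Real.hasDerivAt_log hx.1.ne')
      refine this.congr_deriv ?_
      simp [mul_inv_cancel₀ hx.1.ne']
    have h2 := ((hasDerivAt_mul_const (x := x) (Real.log c)).sub h1).add (hasDerivAt_id x)
    refine h2.congr_deriv ?_
    ring
  have hpos : ∀ x ∈ Set.Ioo (0:ℝ) c, 0 ≤ Real.log c - Real.log x := by
    intro x hx
    have := Real.log_le_log hx.1 hx.2.le
    linarith
  have h3 : IntegrableOn (fun x => Real.log c - Real.log x) (Set.Ioc 0 c) volume :=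
    intervalIntegral.integrableOn_deriv_of_nonneg hcont hderiv hpos
  have h4 : IntegrableOn (fun x => Real.log c - (Real.log c - Real.log x))
      (Set.Ioc 0 c) volume :=
    (integrableOn_const measure_Ioc_lt_top.ne).sub h3
  have h5 : IntegrableOn Real.log (Set.Ioc 0 c) volume := by
    simpa using h4
  exact (intervalIntegrable_iff_integrableOn_Ioc_of_le hc.le).2 h5

/-- The key pointwise logarithmic estimate. -/
private lemma key_est {y u : ℝ} (hu : u ∈ Set.Ioo 0 π) (hy1 : 4 * Real.sin u ^ 2 ≤ y)
    (hy2 : y ≤ 4) :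
    |Real.log y| ≤ Real.log 4 + 2 * Real.log (π / 2) + 2 * |Real.log u|
      + 2 * |Real.log (π - u)| := by
  obtain ⟨hu0, huπ⟩ := hu
  have hπ := Real.pi_pos
  have hsin : 0 < Real.sin u := Real.sin_pos_of_pos_of_lt_pi hu0 huπ
  have hy0 : 0 < y := lt_of_lt_of_le (by positivity) hy1
  have hm0 : 0 < min u (π - u) := lt_min hu0 (by linarith)
  have hm : 2 / π * min u (π - u) ≤ Real.sin u := by
    rcases le_total u (π / 2) with h | h
    · calc 2 / π * min u (π - u) ≤ 2 / π * u :=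
            mul_le_mul_of_nonneg_left (min_le_left _ _) (by positivity)
        _ ≤ Real.sin u := Real.mul_le_sin hu0.le h
    · calc 2 / π * min u (π - u) ≤ 2 / π * (π - u) :=
            mul_le_mul_of_nonneg_left (min_le_right _ _) (by positivity)
        _ ≤ Real.sin (π - u) := Real.mul_le_sin (by linarith) (by linarith)
        _ = Real.sin u := Real.sin_pi_sub u
  have h1 : Real.log y ≤ Real.log 4 := Real.log_le_log hy0 hy2
  have h2 : Real.log (4 * Real.sin u ^ 2) ≤ Real.log y :=
    Real.log_le_log (by positivity) hy1
  have h3 : Real.log (4 * Real.sin u ^ 2) = Real.log 4 + 2 * Real.log (Real.sin u) := by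
    rw [Real.log_mul (by norm_num) (by positivity), Real.log_pow]
    push_cast; ring
  have h4 : Real.log (2 / π * min u (π - u)) ≤ Real.log (Real.sin u) :=
    Real.log_le_log (by positivity) hm
  have h5 : Real.log (2 / π * min u (π - u))
      = -Real.log (π / 2) + Real.log (min u (π - u)) := by
    rw [Real.log_mul (by positivity) hm0.ne', show (2:ℝ) / π = (π / 2)⁻¹ by
      rw [inv_div], Real.log_inv]
  have h6 : |Real.log (min u (π - u))| ≤ |Real.log u| + |Real.log (π - u)| := by
    rcases min_cases u (π - u) with ⟨h, _⟩ | ⟨h, _⟩ <;> rw [h]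
    · exact le_add_of_nonneg_right (abs_nonneg _)
    · exact le_add_of_nonneg_left (abs_nonneg _)
  have hlog4 : (0:ℝ) ≤ Real.log 4 := Real.log_nonneg (by norm_num)
  have hlogpi : (0:ℝ) ≤ Real.log (π / 2) := by
    apply Real.log_nonneg
    nlinarith [Real.pi_gt_three]
  have hneg := neg_abs_le (Real.log (min u (π - u)))
  rw [abs_le]
  constructor
  · linarith
  · linarith [abs_nonneg (Real.log u), abs_nonneg (Real.log (π - u))]

/-- Lemma B.2: for smooth `2π`-periodic `f` and fixed `s`,
`∫₀^{2π} f(t) ln(4cos²((s+t)/2) + 4ε² sin²((s+t)/2)) dt →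
 ∫₀^{2π} f(t) ln(4cos²((s+t)/2)) dt` as `ε → 0⁺`. -/
theorem stmt_17 (f : ℝ → ℝ) (hf : ContDiff ℝ (⊤ : ℕ∞) f)
    (hper : Function.Periodic f (2 * π)) (s : ℝ) :
    Tendsto (fun ε : ℝ =>
        ∫ t in (0:ℝ)..(2 * π),
          f t * Real.log (4 * Real.cos ((s + t) / 2) ^ 2
            + 4 * ε ^ 2 * Real.sin ((s + t) / 2) ^ 2))
      (𝓝[>] 0)
      (𝓝 (∫ t in (0:ℝ)..(2 * π),
          f t * Real.log (4 * Real.cos ((s + t) / 2) ^ 2))) := by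
  have hπ := Real.pi_pos
  set a : ℝ := π - s with ha
  set b : ℝ := a + 2 * π with hb
  have hab : a < b := by rw [hb]; linarith
  -- trig identities
  have hcos : ∀ t : ℝ, Real.cos ((s + t) / 2) ^ 2 = Real.sin ((t - a) / 2) ^ 2 := by
    intro t
    rw [show (s + t) / 2 = π / 2 - (a - t) / 2 by rw [ha]; ring,
      Real.cos_pi_div_two_sub, show (a - t) / 2 = -((t - a) / 2) by ring,
      Real.sin_neg, neg_sq]
  have hsin : ∀ t : ℝ, Real.sin ((s + t) / 2) ^ 2 = Real.cos ((t - a) / 2) ^ 2 := by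
    intro t
    rw [show (s + t) / 2 = π / 2 - (a - t) / 2 by rw [ha]; ring,
      Real.sin_pi_div_two_sub, show (a - t) / 2 = -((t - a) / 2) by ring,
      Real.cos_neg]
  -- periodicity of integrands, shift of integration interval
  have hper2 : ∀ ε : ℝ, Function.Periodic
      (fun t => f t * Real.log (4 * Real.cos ((s + t) / 2) ^ 2
        + 4 * ε ^ 2 * Real.sin ((s + t) / 2) ^ 2)) (2 * π) := by
    intro ε t
    simp only
    rw [show (s + (t + 2 * π)) / 2 = (s + t) / 2 + π by ring,
      Real.cos_add_pi, Real.sin_add_pi, neg_sq, neg_sq, hper t]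
  have hshift : ∀ ε : ℝ,
      (∫ t in (0:ℝ)..(2 * π), f t * Real.log (4 * Real.cos ((s + t) / 2) ^ 2
        + 4 * ε ^ 2 * Real.sin ((s + t) / 2) ^ 2))
      = ∫ t in a..b, f t * Real.log (4 * Real.cos ((s + t) / 2) ^ 2
        + 4 * ε ^ 2 * Real.sin ((s + t) / 2) ^ 2) := by
    intro ε
    have := (hper2 ε).intervalIntegral_add_eq 0 a
    simpa [hb] using this
  -- rewrite the target integral, noting it equals the shifted `ε = 0` integral
  have htarget : (∫ t in (0:ℝ)..(2 * π), f t * Real.log (4 * Real.cos ((s + t) / 2) ^ 2))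
      = ∫ t in a..b, f t * Real.log (4 * Real.cos ((s + t) / 2) ^ 2
        + 4 * (0:ℝ) ^ 2 * Real.sin ((s + t) / 2) ^ 2) := by
    rw [← hshift 0]
    apply intervalIntegral.integral_congr
    intro t _
    norm_num
  rw [htarget]
  have hgoal : ∀ ε : ℝ,
      (∫ t in a..b, f t * Real.log (4 * Real.cos ((s + t) / 2) ^ 2
        + 4 * ε ^ 2 * Real.sin ((s + t) / 2) ^ 2))
      = ∫ t in (0:ℝ)..(2 * π), f t * Real.log (4 * Real.cos ((s + t) / 2) ^ 2
        + 4 * ε ^ 2 * Real.sin ((s + t) / 2) ^ 2) := fun ε => (hshift ε).symm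
  refine Tendsto.congr hgoal ?_
  -- bound for f
  obtain ⟨M, hM⟩ := (isCompact_uIcc (a := a) (b := b)).exists_bound_of_continuousOn
    hf.continuous.continuousOn
  have hM0 : 0 ≤ M := le_trans (norm_nonneg _) (hM a Set.left_mem_uIcc)
  set C0 : ℝ := Real.log 4 + 2 * Real.log (π / 2) + 4 * Real.log 2 with hC0
  -- dominated convergence
  apply intervalIntegral.tendsto_integral_filter_of_dominated_convergence
    (fun x => M * (C0 + 2 * |Real.log (x - a)| + 2 * |Real.log (b - x)|))
  · -- measurability
    filter_upwards with ε
    apply Measurable.aestronglyMeasurable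
    exact hf.continuous.measurable.mul (Real.measurable_log.comp (by fun_prop))
  · -- uniform bound
    have hae : ∀ᵐ x : ℝ ∂volume, x ∉ ({a, b} : Set ℝ) :=
      measure_eq_zero_iff_ae_notMem.mp ((Set.toFinite ({a, b} : Set ℝ)).measure_zero _)
    filter_upwards [Ioo_mem_nhdsGT (zero_lt_one (α := ℝ))] with ε hε
    filter_upwards [hae] with x hx hmem
    rw [Set.uIoc_of_le hab.le] at hmem
    have hxIoo : x ∈ Set.Ioo a b := ⟨hmem.1, lt_of_le_of_ne hmem.2 (by
      intro h; exact hx (by simp [h]))⟩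
    have hu : (x - a) / 2 ∈ Set.Ioo 0 π := by
      constructor
      · linarith [hxIoo.1]
      · have := hxIoo.2; rw [hb] at this; linarith
    set u := (x - a) / 2 with hudef
    have hεsq : ε ^ 2 ≤ 1 := by nlinarith [hε.1, hε.2]
    have harg1 : 4 * Real.sin u ^ 2
        ≤ 4 * Real.cos ((s + x) / 2) ^ 2 + 4 * ε ^ 2 * Real.sin ((s + x) / 2) ^ 2 := by
      rw [hcos x, hsin x]
      have : 0 ≤ 4 * ε ^ 2 * Real.cos u ^ 2 := by positivity
      linarith
    have harg2 : 4 * Real.cos ((s + x) / 2) ^ 2 + 4 * ε ^ 2 * Real.sin ((s + x) / 2) ^ 2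
        ≤ 4 := by
      rw [hcos x, hsin x]
      nlinarith [Real.sin_sq_add_cos_sq u, sq_nonneg (Real.cos u), sq_nonneg (Real.sin u)]
    have hkey := key_est hu harg1 harg2
    -- convert u-terms to x-terms
    have hxa : (0:ℝ) < x - a := by linarith [hxIoo.1]
    have hbx : (0:ℝ) < b - x := by linarith [hxIoo.2]
    have hlu : |Real.log u| ≤ |Real.log (x - a)| + Real.log 2 := by
      rw [hudef, Real.log_div hxa.ne' two_ne_zero, sub_eq_add_neg]
      refine (abs_add_le _ _).trans ?_
      rw [abs_neg, abs_of_nonneg (Real.log_nonneg one_le_two)]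
    have hlv : |Real.log (π - u)| ≤ |Real.log (b - x)| + Real.log 2 := by
      rw [show π - u = (b - x) / 2 by rw [hudef, hb]; ring,
        Real.log_div hbx.ne' two_ne_zero, sub_eq_add_neg]
      refine (abs_add_le _ _).trans ?_
      rw [abs_neg, abs_of_nonneg (Real.log_nonneg one_le_two)]
    have hfx : ‖f x‖ ≤ M := hM x (Set.mem_uIcc.2 (Or.inl ⟨hmem.1.le, hmem.2⟩))
    rw [Real.norm_eq_abs] at hfx ⊢
    rw [abs_mul]
    apply mul_le_mul hfx _ (abs_nonneg _) hM0
    rw [hC0]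
    linarith [hkey, hlu, hlv]
  · -- integrability of the bound
    have hA : IntervalIntegrable (fun x => Real.log (x - a)) volume a b := by
      have := (myIntIntLog Real.two_pi_pos).comp_sub_right a
      simpa [hb, zero_add, add_comm] using this
    have hB : IntervalIntegrable (fun x => Real.log (b - x)) volume a b := by
      have h1 := (myIntIntLog Real.two_pi_pos).comp_add_right b
      -- h1 : IntervalIntegrable (fun x => log (x + b)) volume (0 - b) (2π - b)
      have h2 := (IntervalIntegrable.iff_comp_neg (f := fun x => Real.log (x + b))).mp h1
      -- h2 : IntervalIntegrable (fun x => log (-x + b)) volume (-(0-b)) (-(2π-b))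
      have h3 : IntervalIntegrable (fun x => Real.log (b - x)) volume b a := by
        have : (0:ℝ) - b = -b := by ring
        simpa [sub_eq_add_neg, add_comm, hb, show -(2 * π - b) = a by rw [hb]; ring]
          using h2
      exact h3.symm
    exact (((intervalIntegrable_const).add ((hA.abs).const_mul 2)).add
      ((hB.abs).const_mul 2)).const_mul M
  · -- pointwise limit
    have hae : ∀ᵐ x : ℝ ∂volume, x ∉ ({a, b} : Set ℝ) :=
      measure_eq_zero_iff_ae_notMem.mp ((Set.toFinite ({a, b} : Set ℝ)).measure_zero _)
    filter_upwards [hae] with x hx hmem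
    rw [Set.uIoc_of_le hab.le] at hmem
    have hxIoo : x ∈ Set.Ioo a b := ⟨hmem.1, lt_of_le_of_ne hmem.2 (by
      intro h; exact hx (by simp [h]))⟩
    have hu : (x - a) / 2 ∈ Set.Ioo 0 π := by
      constructor
      · linarith [hxIoo.1]
      · have := hxIoo.2; rw [hb] at this; linarith
    have hpos : 0 < 4 * Real.cos ((s + x) / 2) ^ 2 := by
      rw [hcos x]
      have := Real.sin_pos_of_pos_of_lt_pi hu.1 hu.2
      positivity
    have h1 : Tendsto (fun ε : ℝ => 4 * Real.cos ((s + x) / 2) ^ 2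
        + 4 * ε ^ 2 * Real.sin ((s + x) / 2) ^ 2) (𝓝 0)
        (𝓝 (4 * Real.cos ((s + x) / 2) ^ 2
          + 4 * (0:ℝ) ^ 2 * Real.sin ((s + x) / 2) ^ 2)) := by
      exact (Continuous.tendsto (by fun_prop) 0)
    have h2 : Tendsto (fun ε : ℝ => 4 * Real.cos ((s + x) / 2) ^ 2
        + 4 * ε ^ 2 * Real.sin ((s + x) / 2) ^ 2) (𝓝 0)
        (𝓝 (4 * Real.cos ((s + x) / 2) ^ 2)) := by
      convert h1 using 2
      norm_num
    have h2' : 4 * Real.cos ((s + x) / 2) ^ 2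
        = 4 * Real.cos ((s + x) / 2) ^ 2 + 4 * (0:ℝ) ^ 2 * Real.sin ((s + x) / 2) ^ 2 := by
      norm_num
    have h2b : Tendsto (fun ε : ℝ => 4 * Real.cos ((s + x) / 2) ^ 2
        + 4 * ε ^ 2 * Real.sin ((s + x) / 2) ^ 2) (𝓝[>] 0)
        (𝓝 (4 * Real.cos ((s + x) / 2) ^ 2)) := h2.mono_left nhdsWithin_le_nhds
    have hlogc : ContinuousAt Real.log (4 * Real.cos ((s + x) / 2) ^ 2) :=
      Real.continuousAt_log hpos.ne'
    have h3 : Tendsto (fun ε : ℝ => Real.log (4 * Real.cos ((s + x) / 2) ^ 2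
        + 4 * ε ^ 2 * Real.sin ((s + x) / 2) ^ 2)) (𝓝[>] 0)
        (𝓝 (Real.log (4 * Real.cos ((s + x) / 2) ^ 2))) := hlogc.tendsto.comp h2b
    have h4 : Tendsto (fun ε : ℝ => f x * Real.log (4 * Real.cos ((s + x) / 2) ^ 2
        + 4 * ε ^ 2 * Real.sin ((s + x) / 2) ^ 2)) (𝓝[>] 0)
        (𝓝 (f x * Real.log (4 * Real.cos ((s + x) / 2) ^ 2))) := h3.const_mul (f x)
    rw [← h2']
    exact h4
end
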